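/- For any probability distribution F on the real line having a finite (1+ε)-th absolute moment for some ε > 0 (i.e., ∫ |x|^{1+ε} dF(x) < ∞), and for any a > 0 and any b > μ(F), there exists a probability distribution F' on the real line, also having a finite (1+ε')-th absolute moment for some ε' > 0, such that the Kullback–Leibler divergence D(F, F') ≤ a and the mean of F' satisfies μ(F') ≥ b. -/

import Mathlib

open MeasureTheory Real Classical

/-- Kullback–Leibler divergence between measures on ℝ, as an extended real:
`∫ log(dF/dF') dF` when `F ≪ F'`, and `⊤` otherwise. -/
noncomputable def klDivergence (F F' : Measure ℝ) : EReal :=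
  if F ≪ F' then ((∫ x, Real.log (F.rnDeriv F' x).toReal ∂F : ℝ) : EReal) else ⊤

/-- A probability distribution `F` on ℝ belongs to the class `G` if it has a
finite `(1+ε)`-th absolute moment for some `ε > 0`. -/
def HasFiniteMomentG (F : Measure ℝ) : Prop :=
  ∃ ε : ℝ, 0 < ε ∧ Integrable (fun x => |x| ^ (1 + ε)) F


/-!
Mix `F` with a point mass: `F' = e^{-a} F + (1 - e^{-a}) δ_c`. Then `F ≤ e^a F'`, so
`dF/dF' ≤ e^a` and `D(F, F') ≤ a`; the atom `c` leaves the moment condition intact and can be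
placed so that `F'` has any prescribed mean.
-/

open scoped ENNReal

namespace MeasureTheory

variable {α : Type*} [MeasurableSpace α]

/-- `p μ + (1 - p) ν`, where `ENNReal.ofReal` truncates a negative weight to `0`. -/
noncomputable def Measure.mixture (p : ℝ) (μ ν : Measure α) : Measure α :=
  ENNReal.ofReal p • μ + ENNReal.ofReal (1 - p) • ν

namespace Measure

lemma isProbabilityMeasure_mixture {p : ℝ} (hp0 : 0 ≤ p) (hp1 : p ≤ 1) (μ ν : Measure α)
    [IsProbabilityMeasure μ] [IsProbabilityMeasure ν] : IsProbabilityMeasure (mixture p μ ν) := by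
  constructor
  simp only [mixture, add_apply, smul_apply, measure_univ, smul_eq_mul, mul_one]
  rw [← ENNReal.ofReal_add hp0 (by linarith), add_sub_cancel, ENNReal.ofReal_one]

lemma le_smul_mixture {p : ℝ} (hp : 0 < p) (μ ν : Measure α) :
    μ ≤ ENNReal.ofReal p⁻¹ • mixture p μ ν := by
  have hinv : ENNReal.ofReal p⁻¹ * ENNReal.ofReal p = 1 := by
    rw [← ENNReal.ofReal_mul (inv_nonneg.2 hp.le), inv_mul_cancel₀ hp.ne', ENNReal.ofReal_one]
  rw [mixture, smul_add, smul_smul, hinv, one_smul]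
  exact Measure.le_add_right le_rfl

lemma rnDeriv_le_of_le_smul {μ ν : Measure α} [SigmaFinite ν] {c : ℝ≥0∞} (h : μ ≤ c • ν) :
    μ.rnDeriv ν ≤ᵐ[ν] fun _ ↦ c := by
  refine ae_le_of_forall_setLIntegral_le_of_sigmaFinite (measurable_rnDeriv μ ν) fun s hs _ ↦ ?_
  calc ∫⁻ x in s, μ.rnDeriv ν x ∂ν ≤ μ s := setLIntegral_rnDeriv_le s
    _ ≤ c * ν s := le_iff'.1 h s
    _ = ∫⁻ _ in s, c ∂ν := by rw [setLIntegral_const]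

end Measure

variable {E : Type*} [NormedAddCommGroup E] {f : α → E} {μ ν : Measure α}

lemma Integrable.mixture (hμ : Integrable f μ) (hν : Integrable f ν) (p : ℝ) :
    Integrable f (μ.mixture p ν) :=
  integrable_add_measure.2
    ⟨hμ.smul_measure ENNReal.ofReal_ne_top, hν.smul_measure ENNReal.ofReal_ne_top⟩

lemma integral_mixture [NormedSpace ℝ E] {p : ℝ} (hp0 : 0 ≤ p) (hp1 : p ≤ 1)
    (hμ : Integrable f μ) (hν : Integrable f ν) :
    ∫ x, f x ∂μ.mixture p ν = p • ∫ x, f x ∂μ + (1 - p) • ∫ x, f x ∂ν := by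
  rw [Measure.mixture, integral_add_measure (hμ.smul_measure ENNReal.ofReal_ne_top)
    (hν.smul_measure ENNReal.ofReal_ne_top), integral_smul_measure, integral_smul_measure,
    ENNReal.toReal_ofReal hp0, ENNReal.toReal_ofReal (sub_nonneg.2 hp1)]

end MeasureTheory

lemma klDivergence_le_of_le_smul {F F' : Measure ℝ} [IsProbabilityMeasure F] [SigmaFinite F']
    {a : ℝ} (ha : 0 ≤ a) (h : F ≤ ENNReal.ofReal (exp a) • F') : klDivergence F F' ≤ a := by
  have habs : F ≪ F' :=
    (Measure.absolutelyContinuous_of_le h).trans Measure.smul_absolutelyContinuous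
  have hlog : ∀ᵐ x ∂F, log (F.rnDeriv F' x).toReal ≤ a := by
    filter_upwards [habs.ae_le (Measure.rnDeriv_le_of_le_smul h)] with x hx
    rcases ENNReal.toReal_nonneg.eq_or_lt with h0 | h0
    · rw [← h0, log_zero]
      exact ha
    · exact (log_le_iff_le_exp h0).2 (ENNReal.toReal_le_of_le_ofReal (exp_pos a).le hx)
  rw [klDivergence, if_pos habs, EReal.coe_le_coe_iff]
  by_cases hint : Integrable (fun x ↦ log (F.rnDeriv F' x).toReal) F
  · simpa using integral_mono_ae hint (integrable_const a) hlog
  · rw [integral_undef hint]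
    exact ha

lemma HasFiniteMomentG.integrable_id {F : Measure ℝ} [IsFiniteMeasure F]
    (hF : HasFiniteMomentG F) : Integrable (fun x ↦ x) F := by
  obtain ⟨ε, hε, hmom⟩ := hF
  have hp : (ENNReal.ofReal (1 + ε)).toReal = 1 + ε := ENNReal.toReal_ofReal (by linarith)
  have hLp : MemLp id (ENNReal.ofReal (1 + ε)) F := by
    refine (integrable_norm_rpow_iff aestronglyMeasurable_id (by simp; linarith)
      ENNReal.ofReal_ne_top).1 ?_
    simpa only [hp, id, Real.norm_eq_abs] using hmom
  exact memLp_one_iff_integrable.1 (hLp.mono_exponent (by simp; linarith))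

lemma HasFiniteMomentG.mixture_dirac {F : Measure ℝ} (hF : HasFiniteMomentG F) (p c : ℝ) :
    HasFiniteMomentG (F.mixture p (Measure.dirac c)) := by
  obtain ⟨ε, hε, hmom⟩ := hF
  exact ⟨ε, hε, hmom.mixture (integrable_dirac enorm_lt_top) p⟩

theorem classG_perturbation_exists_general
    (F : Measure ℝ) [IsProbabilityMeasure F]
    (hF : HasFiniteMomentG F)
    (a b : ℝ) (ha : 0 < a) :
    ∃ F' : Measure ℝ, IsProbabilityMeasure F' ∧ HasFiniteMomentG F' ∧
      klDivergence F F' ≤ (a : EReal) ∧ b ≤ ∫ x, x ∂F' := by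
  set p := exp (-a)
  have hp0 : 0 < p := exp_pos _
  have hp1 : p < 1 := exp_lt_one_iff.2 (neg_neg_of_pos ha)
  have hp_inv : p⁻¹ = exp a := by simp only [p, exp_neg, inv_inv]
  set c := (b - p * ∫ x, x ∂F) / (1 - p)
  have hprob := Measure.isProbabilityMeasure_mixture hp0.le hp1.le F (Measure.dirac c)
  refine ⟨F.mixture p (Measure.dirac c), hprob, hF.mixture_dirac p c,
    klDivergence_le_of_le_smul ha.le ?_, ?_⟩
  · simpa only [hp_inv] using Measure.le_smul_mixture hp0 F (Measure.dirac c)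
  · rw [integral_mixture hp0.le hp1.le hF.integrable_id (integrable_dirac enorm_lt_top),
      integral_dirac, smul_eq_mul, smul_eq_mul, mul_div_cancel₀ _ (sub_pos.2 hp1).ne',
      add_sub_cancel]

theorem classG_perturbation_exists
    (F : Measure ℝ) [IsProbabilityMeasure F]
    (hF : HasFiniteMomentG F)
    (a b : ℝ) (ha : 0 < a) (hb : (∫ x, x ∂F) < b) :
    ∃ F' : Measure ℝ, IsProbabilityMeasure F' ∧ HasFiniteMomentG F' ∧
      klDivergence F F' ≤ (a : EReal) ∧ b ≤ ∫ x, x ∂F' :=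
  classG_perturbation_exists_general F hF a b ha
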